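/- Let Σ be a ranked alphabet, n ∈ ℕ, and let u be a natural family u_C : Clone(F(Σ), C) → C_n over locally finite clones C. Then u is bidefinable: for any two locally finite clones C and C′, there exists a common t ∈ Clone(F(y_n), F(Σ)) such that u_C(p) = p∘t for all p ∈ Clone(F(Σ), C) and u_{C′}(p′) = p′∘t for all p′ ∈ Clone(F(Σ), C′). -/
import Mathlib


/-- An abstract clone: a family of sets `C n` with variables and substitution
satisfying the unit and associativity laws. -/
structure CloneStr (C : ℕ → Type) : Type where
  v : ∀ n, Fin n → C n
  s : ∀ m n, C m → (Fin m → C n) → C n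
  s_var : ∀ n (x : C n), s n n x (v n) = x
  var_s : ∀ m n (i : Fin m) (y : Fin m → C n), s m n (v m i) y = y i
  s_assoc : ∀ l m n (x : C l) (y : Fin l → C m) (z : Fin m → C n),
      s m n (s l m x y) z = s l n x (fun i => s m n (y i) z)

/-- A bundled abstract clone. -/
structure BClone : Type 1 where
  C : ℕ → Type
  str : CloneStr C

/-- A clone morphism: a family of functions preserving variables and substitution. -/
structure BCloneHom (A B : BClone) : Type where
  f : ∀ n, A.C n → B.C n
  map_v : ∀ n (i : Fin n), f n (A.str.v n i) = B.str.v n i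
  map_s : ∀ m n (x : A.C m) (y : Fin m → A.C n),
      f n (A.str.s m n x y) = B.str.s m n (f m x) (fun i => f n (y i))

/-- Composition of clone morphisms. -/
def BCloneHom.comp {A B C : BClone} (g : BCloneHom B C) (h : BCloneHom A B) :
    BCloneHom A C where
  f n x := g.f n (h.f n x)
  map_v n i := by show g.f n (h.f n _) = _; rw [h.map_v, g.map_v]
  map_s m n x y := by show g.f n (h.f n _) = _; rw [h.map_s, g.map_s]

/-- A clone is locally finite if each of its arity sets is finite. -/
def LocFin (A : BClone) : Prop := ∀ n, Finite (A.C n)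

lemma BCloneHom.ext' {A B : BClone} {g h : BCloneHom A B} (hf : g.f = h.f) : g = h := by
  cases g; cases h; cases hf; rfl

/-- Product clone `C^I × C'^{I'}` with pointwise structure. -/
def prodClone (C C' : BClone) (I I' : Type) : BClone where
  C m := (I → C.C m) × (I' → C'.C m)
  str :=
  { v := fun m i => (fun _ => C.str.v m i, fun _ => C'.str.v m i)
    s := fun m k x y =>
      (fun a => C.str.s m k (x.1 a) (fun i => (y i).1 a),
       fun a => C'.str.s m k (x.2 a) (fun i => (y i).2 a))
    s_var := fun m x => Prod.ext (funext fun a => C.str.s_var m (x.1 a))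
      (funext fun a => C'.str.s_var m (x.2 a))
    var_s := fun m k i y => Prod.ext (funext fun a => C.str.var_s m k i _)
      (funext fun a => C'.str.var_s m k i _)
    s_assoc := fun l m k x y z => Prod.ext
      (funext fun a => C.str.s_assoc l m k (x.1 a) _ _)
      (funext fun a => C'.str.s_assoc l m k (x.2 a) _ _) }

def projFst (C C' : BClone) (I I' : Type) (a : I) :
    BCloneHom (prodClone C C' I I') C where
  f m x := x.1 a
  map_v _ _ := rfl
  map_s _ _ _ _ := rfl

def projSnd (C C' : BClone) (I I' : Type) (a : I') :
    BCloneHom (prodClone C C' I I') C' where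
  f m x := x.2 a
  map_v _ _ := rfl
  map_s _ _ _ _ := rfl

/-- The image of a clone morphism, as a clone. -/
def imgClone {A B : BClone} (q : BCloneHom A B) : BClone where
  C m := {d : B.C m // ∃ x : A.C m, q.f m x = d}
  str :=
  { v := fun m i => ⟨B.str.v m i, A.str.v m i, q.map_v m i⟩
    s := fun m k x y => ⟨B.str.s m k x.1 (fun i => (y i).1), by
      obtain ⟨a, ha⟩ := x.2
      choose b hb using fun i => (y i).2
      exact ⟨A.str.s m k a b, by rw [q.map_s, ha]; simp [hb]⟩⟩
    s_var := fun m x => Subtype.ext (B.str.s_var m x.1)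
    var_s := fun m k i y => Subtype.ext (B.str.var_s m k i _)
    s_assoc := fun l m k x y z => Subtype.ext (B.str.s_assoc l m k x.1 _ _) }

def imgIncl {A B : BClone} (q : BCloneHom A B) : BCloneHom (imgClone q) B where
  f m x := x.1
  map_v _ _ := rfl
  map_s _ _ _ _ := rfl

def imgCorestrict {A B : BClone} (q : BCloneHom A B) : BCloneHom A (imgClone q) where
  f m x := ⟨q.f m x, x, rfl⟩
  map_v m i := Subtype.ext (q.map_v m i)
  map_s m k x y := Subtype.ext (q.map_s m k x y)

lemma imgIncl_comp {A B : BClone} (q : BCloneHom A B) :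
    (imgIncl q).comp (imgCorestrict q) = q :=
  BCloneHom.ext' rfl

/-- the key bidefinability lemma.  Let `Fsig` be the free clone on a
ranked alphabet `ns : Fin l → ℕ` and let `u` be a natural family
`u_C : Clone(F(Σ), C) → C_n` over locally finite clones.  Then `u` is bidefinable:
for any two locally finite clones `C, C'` there is a common
`t ∈ Clone(F(y_n), F(Σ)) ≅ F(Σ)_n` with `u_C = (−)∘t` and `u_{C'} = (−)∘t`. -/
theorem profinite_tree_bidefinable (l : ℕ) (ns : Fin l → ℕ) (Fsig : BClone)
    (e : ∀ B : BClone, BCloneHom Fsig B ≃ (∀ j : Fin l, B.C (ns j)))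
    (hfree : ∀ (B B' : BClone) (φ : BCloneHom B B') (p : BCloneHom Fsig B),
      e B' (φ.comp p) = fun j => φ.f (ns j) (e B p j))
    (n : ℕ)
    (u : ∀ B : BClone, BCloneHom Fsig B → B.C n)
    (hnat : ∀ (B B' : BClone), LocFin B → LocFin B' →
      ∀ (φ : BCloneHom B B') (p : BCloneHom Fsig B),
        φ.f n (u B p) = u B' (φ.comp p)) :
    ∀ (C C' : BClone), LocFin C → LocFin C' →
      ∃ t : Fsig.C n,
        (∀ p : BCloneHom Fsig C, u C p = p.f n t) ∧
        (∀ p' : BCloneHom Fsig C', u C' p' = p'.f n t) := by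
  intro C C' hC hC'
  haveI : ∀ j, Finite (C.C (ns j)) := fun j => hC (ns j)
  haveI : ∀ j, Finite (C'.C (ns j)) := fun j => hC' (ns j)
  haveI hHomC : Finite (BCloneHom Fsig C) := Finite.of_equiv _ (e C).symm
  haveI hHomC' : Finite (BCloneHom Fsig C') := Finite.of_equiv _ (e C').symm
  set D := prodClone C C' (BCloneHom Fsig C) (BCloneHom Fsig C') with hDdef
  have hD : LocFin D := fun m => by
    haveI := hC m; haveI := hC' m
    exact inferInstanceAs (Finite ((_ → C.C m) × (_ → C'.C m)))
  set q : BCloneHom Fsig D :=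
    (e D).symm (fun j => (fun p => e C p j, fun p' => e C' p' j)) with hqdef
  have heDq : e D q = fun j => (fun p => e C p j, fun p' => e C' p' j) :=
    (e D).apply_symm_apply _
  have hE : LocFin (imgClone q) := fun m => by
    haveI := hD m
    exact inferInstanceAs (Finite {d : D.C m // _})
  obtain ⟨t, ht⟩ := (u (imgClone q) (imgCorestrict q)).2
  have huD : u D q = q.f n t := by
    rw [← imgIncl_comp q, ← hnat (imgClone q) D hE hD (imgIncl q) (imgCorestrict q)]
    exact ht.symm
  refine ⟨t, fun p => ?_, fun p' => ?_⟩
  · have hpq : (projFst C C' _ _ p).comp q = p := by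
      apply (e C).injective
      rw [hfree]
      funext j
      rw [heDq]; rfl
    calc u C p = u C ((projFst C C' _ _ p).comp q) := by rw [hpq]
      _ = (projFst C C' _ _ p).f n (u D q) :=
          (hnat D C hD hC (projFst C C' _ _ p) q).symm
      _ = (projFst C C' _ _ p).f n (q.f n t) := by rw [huD]
      _ = ((projFst C C' _ _ p).comp q).f n t := rfl
      _ = p.f n t := by rw [hpq]
  · have hpq : (projSnd C C' _ _ p').comp q = p' := by
      apply (e C').injective
      rw [hfree]
      funext j
      rw [heDq]; rfl
    calc u C' p' = u C' ((projSnd C C' _ _ p').comp q) := by rw [hpq]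
      _ = (projSnd C C' _ _ p').f n (u D q) :=
          (hnat D C' hD hC' (projSnd C C' _ _ p') q).symm
      _ = (projSnd C C' _ _ p').f n (q.f n t) := by rw [huD]
      _ = ((projSnd C C' _ _ p').comp q).f n t := rfl
      _ = p'.f n t := by rw [hpq]
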